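/- There exists exactly one compatible root graded anti-pre-Lie algebraic structure on sl₂(ℂ): namely, if ∘ is a bilinear operation on sl₂(ℂ) with h∘e = α₁e, e∘h = (α₁−2)e, h∘f = β₁f, f∘h = (β₁+2)f, e∘f = γ₁h, f∘e = (γ₁−1)h, h∘h = λ₁h, e∘e = f∘f = 0, satisfying the anti-pre-Lie identity x∘(y∘z) − y∘(x∘z) = [y,x]∘z, then necessarily α₁ = −2, β₁ = 2, γ₁ = 1/2, λ₁ = 0. -/

import Mathlib

/-!
Evaluating the anti-pre-Lie identity on the triples `(h, e, f)`, `(h, f, e)`, `(e, f, e)` and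
`(f, e, f)` gives, in each case, a multiple of a single basis vector, hence four polynomial
equations in `α₁, β₁, γ₁, λ₁`. The last two rule out `γ₁ = 0` and `γ₁ = 1`; the first two then
give `λ₁ = β₁ - 2 = α₁ + 2`, while the last two combine to `α₁ β₁ = -4`, so `(α₁ + 2)² = 0`.
-/

section

variable {K V : Type*} [Field K] [AddCommGroup V] [Module K V]

def IsAntiPreLie (c : V →ₗ[K] V →ₗ[K] V) : Prop :=
  ∀ x y z : V, c x (c y z) - c y (c x z) = c (c y x - c x y) z

theorem IsAntiPreLie.sl2_relations {c : V →ₗ[K] V →ₗ[K] V} (hc : IsAntiPreLie c) {e f h : V}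
    (he0 : e ≠ 0) (hf0 : f ≠ 0) (hh0 : h ≠ 0) {α β γ l : K}
    (hhe : c h e = α • e) (heh : c e h = (α - 2) • e)
    (hhf : c h f = β • f) (hfh : c f h = (β + 2) • f)
    (hef : c e f = γ • h) (hfe : c f e = (γ - 1) • h)
    (hhh : c h h = l • h) (hee : c e e = 0) (hff : c f f = 0) :
    γ * l - β * γ = -2 * γ ∧ (γ - 1) * l - α * (γ - 1) = 2 * (γ - 1) ∧
      (γ - 1) * (α - 2) = -α ∧ γ * (β + 2) = β := by
  refine ⟨?hef, ?hfe, ?efe, ?fef⟩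
  case hef =>
    have t := hc h e f
    simp only [hef, hhf, heh, hhe, hhh, map_smul, map_sub, LinearMap.sub_apply,
      LinearMap.smul_apply, smul_smul] at t
    apply smul_left_injective K hh0
    linear_combination (norm := module) t
  case hfe =>
    have t := hc h f e
    simp only [hfe, hhe, hfh, hhf, hhh, map_smul, map_sub, LinearMap.sub_apply,
      LinearMap.smul_apply, smul_smul] at t
    apply smul_left_injective K hh0
    linear_combination (norm := module) t
  case efe =>
    have t := hc e f e
    simp only [hfe, heh, hee, hef, hhe, map_smul, map_sub, LinearMap.sub_apply,
      LinearMap.smul_apply, smul_smul, map_zero, sub_zero] at t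
    apply smul_left_injective K he0
    linear_combination (norm := module) t
  case fef =>
    have t := hc f e f
    simp only [hef, hfh, hff, hfe, hhf, map_smul, map_sub, LinearMap.sub_apply,
      LinearMap.smul_apply, smul_smul, map_zero, sub_zero] at t
    apply smul_left_injective K hf0
    linear_combination (norm := module) t

end

theorem sl2_constants_of_relations {K : Type*} [Field K] [NeZero (2 : K)] {α β γ l : K}
    (E1 : γ * l - β * γ = -2 * γ) (E2 : (γ - 1) * l - α * (γ - 1) = 2 * (γ - 1))
    (E3 : (γ - 1) * (α - 2) = -α) (E4 : γ * (β + 2) = β) :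
    α = -2 ∧ β = 2 ∧ γ = 1 / 2 ∧ l = 0 := by
  have hγ0 : γ ≠ 0 := by
    rintro rfl
    exact two_ne_zero (by linear_combination E3 : (2 : K) = 0)
  have hγ1 : γ - 1 ≠ 0 := by
    intro h0
    exact two_ne_zero (by linear_combination E4 - (β + 2) * h0 : (2 : K) = 0)
  have hl1 : l = β - 2 := mul_left_cancel₀ hγ0 (by linear_combination E1)
  have hl2 : l = α + 2 := mul_left_cancel₀ hγ1 (by linear_combination E2)
  have hαβ : α * β = -4 := mul_left_cancel₀ (mul_ne_zero hγ0 hγ1)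
    (by linear_combination ((γ - 1) * β) * E3 + (2 * (γ - 1)) * E4)
  have hα : α = -2 := by
    have hsq : (α + 2) ^ 2 = 0 := by linear_combination hαβ - α * (hl2 - hl1)
    linear_combination pow_eq_zero_iff two_ne_zero |>.mp hsq
  refine ⟨hα, by linear_combination hl2 - hl1 + hα, ?_, by linear_combination hl2 + hα⟩
  rw [eq_div_iff two_ne_zero]
  exact mul_left_cancel₀ two_ne_zero (by linear_combination γ * hα - E3 : (2 : K) * (γ * 2) = 2 * 1)

theorem stmt4_general {A : Type*} [AddCommGroup A] [Module ℂ A]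
    (B : Module.Basis (Fin 3) ℂ A) (e f h : A)
    (he : e = B 0) (hf : f = B 1) (hh : h = B 2)
    (c : A →ₗ[ℂ] A →ₗ[ℂ] A)
    (α₁ β₁ γ₁ lam₁ : ℂ)
    (apl : ∀ x y z : A, c x (c y z) - c y (c x z) = c (c y x - c x y) z)
    (hhe : c h e = α₁ • e) (heh : c e h = (α₁ - 2) • e)
    (hhf : c h f = β₁ • f) (hfh : c f h = (β₁ + 2) • f)
    (hef : c e f = γ₁ • h) (hfe : c f e = (γ₁ - 1) • h)
    (hhh : c h h = lam₁ • h) (hee : c e e = 0) (hff : c f f = 0) :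
    α₁ = -2 ∧ β₁ = 2 ∧ γ₁ = 1/2 ∧ lam₁ = 0 := by
  subst he hf hh
  obtain ⟨E1, E2, E3, E4⟩ := IsAntiPreLie.sl2_relations apl (B.ne_zero 0) (B.ne_zero 1)
    (B.ne_zero 2) hhe heh hhf hfh hef hfe hhh hee hff
  exact sl2_constants_of_relations E1 E2 E3 E4

/-- Uniqueness of the compatible root graded anti-pre-Lie algebraic
structure on `sl₂(ℂ)`: the constants are forced to be
`α₁ = −2`, `β₁ = 2`, `γ₁ = 1/2`, `λ₁ = 0`. -/
theorem stmt4 {A : Type*} [AddCommGroup A] [Module ℂ A]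
    (B : Module.Basis (Fin 3) ℂ A) (e f h : A)
    (he : e = B 0) (hf : f = B 1) (hh : h = B 2)
    (c : A →ₗ[ℂ] A →ₗ[ℂ] A)
    (α₁ β₁ γ₁ lam₁ : ℂ)
    (apl : ∀ x y z : A, c x (c y z) - c y (c x z) = c (c y x - c x y) z)
    (jac : ∀ x y z : A,
      (c (c x y - c y x) z - c z (c x y - c y x)) +
      (c (c y z - c z y) x - c x (c y z - c z y)) +
      (c (c z x - c x z) y - c y (c z x - c x z)) = 0)
    (hhe : c h e = α₁ • e) (heh : c e h = (α₁ - 2) • e)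
    (hhf : c h f = β₁ • f) (hfh : c f h = (β₁ + 2) • f)
    (hef : c e f = γ₁ • h) (hfe : c f e = (γ₁ - 1) • h)
    (hhh : c h h = lam₁ • h) (hee : c e e = 0) (hff : c f f = 0) :
    α₁ = -2 ∧ β₁ = 2 ∧ γ₁ = 1/2 ∧ lam₁ = 0 :=
  stmt4_general B e f h he hf hh c α₁ β₁ γ₁ lam₁ apl hhe heh hhf hfh hef hfe hhh hee hff
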